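/- arXiv:cs/9907036 — 3 statements merged into one kernel-verified Lean document; each statement's English description precedes it below -/
import Mathlib

section
/- In the election constructed from a 3DM instance (M,W,X,Y) with ||M|| > 1 and q = ||W|| (with 2||M||-1 voters: one voter per triple of M placing s or t at bottom, then c, then the triple's three elements, then the other separator, then the rest; plus ||M||-1 voters placing c on top), the distinguished candidate c is preferred to each of s and t by strictly more than half of the voters, and c is preferred to every candidate in W ∪ X ∪ Y by exactly ||M||-1 of the 2||M||-1 voters. -/
/-- A voter's preference order is a list of candidates in *increasing* order of
preference (the head is the least preferred, the last element the most preferred).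
`prefers v x y` means voter `v` strictly prefers `x` to `y`. -/
def prefers {α : Type*} [DecidableEq α] (v : List α) (x y : α) : Prop :=
  v.idxOf y < v.idxOf x

/-- The number of voters in the profile `V` preferring `x` to `y`. -/
def numPrefer {α : Type*} [DecidableEq α] (V : List (List α)) (x y : α) : ℕ :=
  (V.filter (fun v => decide (v.idxOf y < v.idxOf x))).length

/-- `c` is a Condorcet winner: strictly more than half of the voters prefer `c`
to each other candidate. -/
def CondorcetWinner {α : Type*} [DecidableEq α] (C : Finset α) (V : List (List α))
    (c : α) : Prop :=
  c ∈ C ∧ ∀ d ∈ C, d ≠ c → V.length < 2 * numPrefer V c d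

/-- One switch in a single preference order: exchange two adjacent candidates. -/
def SwitchVoter {α : Type*} (v w : List α) : Prop :=
  ∃ (l r : List α) (x y : α), v = l ++ x :: y :: r ∧ w = l ++ y :: x :: r

/-- One switch in a profile: exchange two adjacent candidates in one voter's order. -/
def SwitchProfile {α : Type*} (V W : List (List α)) : Prop :=
  ∃ (P Q : List (List α)) (v w : List α),
    V = P ++ v :: Q ∧ W = P ++ w :: Q ∧ SwitchVoter v w

/-- `Reach R k a b`: `b` is reachable from `a` in exactly `k` `R`-steps. -/
def Reach {β : Type*} (R : β → β → Prop) : ℕ → β → β → Prop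
  | 0, a, b => a = b
  | k + 1, a, b => ∃ m, R a m ∧ Reach R k m b

/-- The Dodgson score of candidate `c`: the minimum number of switches needed to
make `c` a Condorcet winner. -/
noncomputable def DodgsonScore {α : Type*} [DecidableEq α] (C : Finset α)
    (V : List (List α)) (c : α) : ℕ :=
  sInf {k | ∃ W, Reach SwitchProfile k V W ∧ CondorcetWinner C W c}

/-- `v` is a valid preference order on the candidate set `C`. -/
def IsVoter {α : Type*} [DecidableEq α] (C : Finset α) (v : List α) : Prop :=
  v.Nodup ∧ ∀ x, x ∈ v ↔ x ∈ C

/-- Validity of a 3DM instance `(M, Ws, Xs, Ys)` with `||M|| > 1`, together with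
fresh, distinct candidates `c`, `s`, `t`. -/
def TDMOK {α : Type*} [DecidableEq α] (Ws Xs Ys : Finset α)
    (M : List (α × α × α)) (c s t : α) : Prop :=
  Ws.Nonempty ∧ Xs.Nonempty ∧ Ys.Nonempty ∧
  Disjoint Ws Xs ∧ Disjoint Ws Ys ∧ Disjoint Xs Ys ∧
  Ws.card = Xs.card ∧ Ws.card = Ys.card ∧
  (∀ m ∈ M, m.1 ∈ Ws ∧ m.2.1 ∈ Xs ∧ m.2.2 ∈ Ys) ∧
  M.Nodup ∧ 1 < M.length ∧
  c ∉ Ws ∪ Xs ∪ Ys ∧ s ∉ Ws ∪ Xs ∪ Ys ∧ t ∉ Ws ∪ Xs ∪ Ys ∧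
  c ≠ s ∧ c ≠ t ∧ s ≠ t

/-- The candidate set `W ∪ X ∪ Y ∪ {c, s, t}`. -/
def TDMCands {α : Type*} [DecidableEq α] (Ws Xs Ys : Finset α) (c s t : α) :
    Finset α :=
  Ws ∪ Xs ∪ Ys ∪ {c, s, t}

/-- The voter simulating a triple `(w, x, y)` of `M` (lists are in increasing
preference). If `odd` (1-based odd index) the order is
`⟨s < c < w < x < y < t < rest⟩`, otherwise `s` and `t` are exchanged; `R` lists
the remaining candidates in arbitrary order. -/
def IsTripleVoter {α : Type*} [DecidableEq α] (Cs : Finset α) (c s t w x y : α)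
    (odd : Bool) (v : List α) : Prop :=
  ∃ R : List α, R.Nodup ∧
    (∀ z, z ∈ R ↔ (z ∈ Cs ∧ z ∉ ({s, c, w, x, y, t} : Finset α))) ∧
    v = (if odd then [s, c, w, x, y, t] else [t, c, w, x, y, s]) ++ R

/-- A voter ranking `c` on top of all other candidates. -/
def IsTopVoter {α : Type*} [DecidableEq α] (Cs : Finset α) (c : α)
    (v : List α) : Prop :=
  ∃ R : List α, R.Nodup ∧ (∀ z, z ∈ R ↔ (z ∈ Cs ∧ z ≠ c)) ∧ v = R ++ [c]

/-- The election built from the 3DM instance: one voter per triple of `M`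
(`s` and `t` alternating with the parity of the 1-based index), followed by
`||M|| - 1` voters ranking `c` on top; `2||M|| - 1` voters in total. -/
def IsTDMElection {α : Type*} [DecidableEq α] (Ws Xs Ys : Finset α)
    (M : List (α × α × α)) (c s t : α) (V : List (List α)) : Prop :=
  ∃ V₁ V₂ : List (List α),
    V = V₁ ++ V₂ ∧
    V₂.length = M.length - 1 ∧
    (∃ h : V₁.length = M.length, ∀ i : Fin V₁.length,
      IsTripleVoter (TDMCands Ws Xs Ys c s t) c s t
        (M.get ⟨(i : ℕ), h ▸ i.isLt⟩).1
        (M.get ⟨(i : ℕ), h ▸ i.isLt⟩).2.1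
        (M.get ⟨(i : ℕ), h ▸ i.isLt⟩).2.2
        ((i : ℕ) % 2 == 0) (V₁.get i)) ∧
    (∀ v ∈ V₂, IsTopVoter (TDMCands Ws Xs Ys c s t) c v)

/-- `M` contains a matching: `q = ||Ws||` pairwise coordinate-disjoint triples. -/
def HasMatching {α : Type*} [DecidableEq α] (Ws : Finset α)
    (M : List (α × α × α)) : Prop :=
  ∃ M' : Finset (α × α × α), (∀ m ∈ M', m ∈ M) ∧ M'.card = Ws.card ∧
    ∀ m₁ ∈ M', ∀ m₂ ∈ M', m₁ ≠ m₂ →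
      m₁.1 ≠ m₂.1 ∧ m₁.2.1 ≠ m₂.2.1 ∧ m₁.2.2 ≠ m₂.2.2

/-! The `||M|| - 1` top voters prefer `c` to everybody. A triple voter ranks `c` second from the
bottom, just above `s` (odd index) or `t` (even index), so it prefers `c` to no candidate of
`W ∪ X ∪ Y`; the first two triple voters supply one extra vote of `c` over `s` and over `t`,
lifting both counts to `||M||` out of `2||M|| - 1`. -/

section Prefers

variable {α : Type*} [DecidableEq α]

theorem prefers_cons_cons {a b : α} (l : List α) (hba : b ≠ a) : prefers (a :: b :: l) b a := by
  unfold prefers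
  rw [List.idxOf_cons_self, List.idxOf_cons_ne _ hba.symm, List.idxOf_cons_self]
  exact Nat.zero_lt_one

theorem not_prefers_cons_cons {a b z : α} (l : List α) (hba : b ≠ a) (hza : z ≠ a) :
    ¬ prefers (a :: b :: l) b z := by
  unfold prefers
  rw [List.idxOf_cons_ne _ hza.symm, List.idxOf_cons_ne _ hba.symm, List.idxOf_cons_self]
  omega

theorem prefers_append_singleton {R : List α} {c z : α} (hz : z ∈ R) (hc : c ∉ R) :
    prefers (R ++ [c]) c z := by
  unfold prefers
  rw [List.idxOf_append_of_mem hz, List.idxOf_append_of_notMem hc, List.idxOf_cons_self]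
  exact List.idxOf_lt_length_of_mem hz

end Prefers

section NumPrefer

variable {α : Type*} [DecidableEq α] {V : List (List α)} {x y : α}

theorem numPrefer_append (V₁ V₂ : List (List α)) (x y : α) :
    numPrefer (V₁ ++ V₂) x y = numPrefer V₁ x y + numPrefer V₂ x y := by
  simp [numPrefer, List.filter_append]

theorem numPrefer_eq_length (h : ∀ v ∈ V, prefers v x y) : numPrefer V x y = V.length := by
  unfold numPrefer
  rw [List.filter_eq_self.mpr fun v hv => decide_eq_true (h v hv : v.idxOf y < v.idxOf x)]

theorem numPrefer_eq_zero (h : ∀ v ∈ V, ¬ prefers v x y) : numPrefer V x y = 0 := by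
  unfold numPrefer
  rw [List.length_eq_zero_iff, List.filter_eq_nil_iff]
  exact fun v hv => by simpa [prefers] using h v hv

theorem numPrefer_pos {v : List α} (hv : v ∈ V) (h : prefers v x y) : 0 < numPrefer V x y :=
  List.length_pos_of_mem (List.mem_filter.mpr ⟨hv, decide_eq_true (h : v.idxOf y < v.idxOf x)⟩)

end NumPrefer

section Voters

variable {α : Type*} [DecidableEq α] {Cs : Finset α} {c s t w x y : α} {v : List α}

theorem IsTopVoter.prefers {z : α} (hv : IsTopVoter Cs c v) (hz : z ∈ Cs) (hzc : z ≠ c) :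
    prefers v c z := by
  obtain ⟨R, -, hR, rfl⟩ := hv
  exact prefers_append_singleton ((hR z).mpr ⟨hz, hzc⟩) fun hc => ((hR c).mp hc).2 rfl

theorem IsTripleVoter.exists_eq_cons {odd : Bool} (hv : IsTripleVoter Cs c s t w x y odd v) :
    ∃ l, v = (if odd then s else t) :: c :: l := by
  obtain ⟨R, -, -, rfl⟩ := hv
  cases odd <;> simp

theorem IsTripleVoter.prefers_of_odd (hv : IsTripleVoter Cs c s t w x y true v) (hcs : c ≠ s) :
    prefers v c s := by
  obtain ⟨l, rfl⟩ := hv.exists_eq_cons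
  exact prefers_cons_cons l hcs

theorem IsTripleVoter.prefers_of_even (hv : IsTripleVoter Cs c s t w x y false v) (hct : c ≠ t) :
    prefers v c t := by
  obtain ⟨l, rfl⟩ := hv.exists_eq_cons
  exact prefers_cons_cons l hct

theorem IsTripleVoter.not_prefers {odd : Bool} {z : α} (hv : IsTripleVoter Cs c s t w x y odd v)
    (hcs : c ≠ s) (hct : c ≠ t) (hzs : z ≠ s) (hzt : z ≠ t) : ¬ prefers v c z := by
  obtain ⟨l, rfl⟩ := hv.exists_eq_cons
  cases odd
  · exact not_prefers_cons_cons l hct hzt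
  · exact not_prefers_cons_cons l hcs hzs

end Voters

/-- In the election from a 3DM instance with `||M|| > 1`, `c` is
preferred to each of `s` and `t` by strictly more than half of the voters, and
`c` is preferred to every candidate of `W ∪ X ∪ Y` by exactly `||M|| - 1` of the
`2||M|| - 1` voters. -/
theorem tdm_election_counts {α : Type*} [DecidableEq α]
    (Ws Xs Ys : Finset α) (M : List (α × α × α)) (c s t : α)
    (V : List (List α))
    (hok : TDMOK Ws Xs Ys M c s t)
    (hel : IsTDMElection Ws Xs Ys M c s t V) :
    V.length = 2 * M.length - 1 ∧
    V.length < 2 * numPrefer V c s ∧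
    V.length < 2 * numPrefer V c t ∧
    ∀ z ∈ Ws ∪ Xs ∪ Ys, numPrefer V c z = M.length - 1 := by
  obtain ⟨V₁, V₂, rfl, hV₂, ⟨hV₁, htrip⟩, htop⟩ := hel
  obtain ⟨-, -, -, -, -, -, -, -, -, -, hM, hc, hs, ht, hcs, hct, -⟩ := hok
  have hcount : ∀ z ∈ TDMCands Ws Xs Ys c s t, z ≠ c →
      numPrefer (V₁ ++ V₂) c z = numPrefer V₁ c z + (M.length - 1) := fun z hz hzc => by
    rw [numPrefer_append, numPrefer_eq_length fun v hv => (htop v hv).prefers hz hzc, hV₂]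
  have hs₁ : 0 < numPrefer V₁ c s :=
    numPrefer_pos (List.get_mem V₁ ⟨0, by omega⟩) ((htrip ⟨0, by omega⟩).prefers_of_odd hcs)
  have ht₁ : 0 < numPrefer V₁ c t :=
    numPrefer_pos (List.get_mem V₁ ⟨1, by omega⟩) ((htrip ⟨1, by omega⟩).prefers_of_even hct)
  refine ⟨by rw [List.length_append]; omega, ?_, ?_, fun z hz => ?_⟩
  · rw [hcount s (by simp [TDMCands]) hcs.symm, List.length_append]; omega
  · rw [hcount t (by simp [TDMCands]) hct.symm, List.length_append]; omega
  · have hV₁z : numPrefer V₁ c z = 0 := numPrefer_eq_zero fun v hv => by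
      obtain ⟨i, rfl⟩ := List.mem_iff_get.mp hv
      exact (htrip i).not_prefers hcs hct (fun h => hs (h ▸ hz)) fun h => ht (h ▸ hz)
    rw [hcount z (Finset.mem_union_left _ hz) fun h => hc (h ▸ hz), hV₁z, zero_add]
end

section
/- In the Merge construction applied to odd-voter Dodgson triples (C,c,V) and (D,d,W) with c ≠ d and disjoint candidate sets, the number of voters preferring c to d equals ||V|| + ⌈||W||/2⌉, and 2·(||V|| + ⌈||W||/2⌉) = 2||V|| + ||W|| + 1; that is, c is preferred to d by exactly half of the 2||V|| + ||W|| + 1 voters, so neither c nor d has a strict majority over the other. -/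
section Merge

variable {α : Type*} [DecidableEq α]

/-- Validity of the data for the `Merge` construction: Dodgson triples
`(C, c, V)` and `(D, d, W)` with `c ≠ d`, disjoint candidate sets, both with an
odd number of voters and `||V|| ≥ ||W||`; `cL` and `dL` are fixed enumerations
of `C \ {c}` and `D \ {d}`; `sL` and `tL` enumerate the fresh separator sets `S`
and `T`, each of size `2(||C||·||V|| + ||D||·||W||)`. -/
def MergeOK (C D : Finset α) (c d : α) (V W : List (List α))
    (cL dL sL tL : List α) : Prop :=
  c ∈ C ∧ d ∈ D ∧ c ≠ d ∧ Disjoint C D ∧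
  Odd V.length ∧ Odd W.length ∧ W.length ≤ V.length ∧
  (∀ v ∈ V, IsVoter C v) ∧ (∀ w ∈ W, IsVoter D w) ∧
  cL.Nodup ∧ (∀ z, z ∈ cL ↔ (z ∈ C ∧ z ≠ c)) ∧
  dL.Nodup ∧ (∀ z, z ∈ dL ↔ (z ∈ D ∧ z ≠ d)) ∧
  sL.Nodup ∧ tL.Nodup ∧
  sL.length = 2 * (C.card * V.length + D.card * W.length) ∧
  tL.length = 2 * (C.card * V.length + D.card * W.length) ∧
  (∀ z ∈ sL, z ∉ C ∧ z ∉ D ∧ z ∉ tL) ∧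
  (∀ z ∈ tL, z ∉ C ∧ z ∉ D)

/-- The merged candidate set `Ĉ = C ∪ D ∪ S ∪ T`. -/
def MergeCands (C D : Finset α) (sL tL : List α) : Finset α :=
  C ∪ D ∪ sL.toFinset ∪ tL.toFinset

/-- The merged voter list `V̂` (orders are lists in increasing preference):
(a) for each voter `v` of `V` the order `⟨d < S < D\{d} < T < v⟩`;
(b) for each voter `w` of `W` the order `⟨T < c < S < C\{c} < w⟩`;
(c) `⌈||V||/2⌉ - ⌈||W||/2⌉` voters `⟨T < c < S < C\{c} < D\{d} < d⟩`;
(d) `⌈||V||/2⌉` voters `⟨T < C\{c} < D\{d} < reversed S < c < d⟩`;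
(e) `⌈||W||/2⌉` voters `⟨T < C\{c} < D\{d} < S < d < c⟩`. -/
def MergeProfile (c d : α) (V W : List (List α)) (cL dL sL tL : List α) :
    List (List α) :=
  V.map (fun v => [d] ++ sL ++ dL ++ tL ++ v) ++
  W.map (fun w => tL ++ [c] ++ sL ++ cL ++ w) ++
  List.replicate ((V.length + 1) / 2 - (W.length + 1) / 2)
    (tL ++ [c] ++ sL ++ cL ++ dL ++ [d]) ++
  List.replicate ((V.length + 1) / 2) (tL ++ cL ++ dL ++ sL.reverse ++ [c, d]) ++
  List.replicate ((W.length + 1) / 2) (tL ++ cL ++ dL ++ sL ++ [d, c])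

end Merge

/-- In the `Merge` election, the number of voters preferring `c`
to `d` equals `||V|| + ⌈||W||/2⌉`, and twice this number equals the total
number `2||V|| + ||W|| + 1` of voters, i.e., exactly half the voters prefer
`c` to `d`. -/
theorem merge_c_vs_d {α : Type*} [DecidableEq α]
    (C D : Finset α) (c d : α) (V W : List (List α)) (cL dL sL tL : List α)
    (hok : MergeOK C D c d V W cL dL sL tL) :
    numPrefer (MergeProfile c d V W cL dL sL tL) c d =
      V.length + (W.length + 1) / 2 ∧
    2 * (V.length + (W.length + 1) / 2) = 2 * V.length + W.length + 1 ∧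
    (MergeProfile c d V W cL dL sL tL).length =
      2 * V.length + W.length + 1 := by
  obtain ⟨hcC, hdD, hcd, hdisj, hVodd, hWodd, hWV, hV, hW, hcLnd, hcL, hdLnd, hdL,
    hsLnd, htLnd, hsLen, htLen, hsL, htL⟩ := hok
  have hcsL : c ∉ sL := fun h => (hsL c h).1 hcC
  have hctL : c ∉ tL := fun h => (htL c h).1 hcC
  have hcdL : c ∉ dL := fun h => Finset.disjoint_left.mp hdisj hcC ((hdL c).1 h).1
  have hccL : c ∉ cL := fun h => ((hcL c).1 h).2 rfl
  have hdsL : d ∉ sL := fun h => (hsL d h).2.1 hdD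
  have hdtL : d ∉ tL := fun h => (htL d h).2 hdD
  have hdcL : d ∉ cL := fun h => Finset.disjoint_left.mp hdisj ((hcL d).1 h).1 hdD
  have hddL : d ∉ dL := fun h => ((hdL d).1 h).2 rfl
  obtain ⟨m, hm⟩ := hVodd
  obtain ⟨n, hn⟩ := hWodd
  set p : List α → Bool := fun v => decide (v.idxOf d < v.idxOf c) with hp
  -- Block A: all voters prefer c to d
  have hA : (List.filter p (V.map (fun v => [d] ++ sL ++ dL ++ tL ++ v))).length
      = V.length := by
    rw [List.filter_eq_self.mpr, List.length_map]
    intro a ha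
    simp only [List.mem_map] at ha
    obtain ⟨v, _, rfl⟩ := ha
    simp only [hp, List.append_assoc, List.singleton_append, List.cons_append,
      List.idxOf_cons_self, List.idxOf_cons_ne _ (Ne.symm hcd), decide_eq_true_eq]
    omega
  -- Block B: no voter prefers c to d
  have hB : List.filter p (W.map (fun w => tL ++ [c] ++ sL ++ cL ++ w)) = [] := by
    rw [List.filter_eq_nil_iff]
    intro a ha
    simp only [List.mem_map] at ha
    obtain ⟨w, _, rfl⟩ := ha
    simp only [hp, List.append_assoc, List.singleton_append, List.cons_append,
      List.idxOf_append_of_notMem hctL, List.idxOf_append_of_notMem hdtL,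
      List.idxOf_cons_self, List.idxOf_cons_ne _ hcd,
      decide_eq_true_eq]
    omega
  -- Block C
  have hC : List.filter p (List.replicate ((V.length + 1) / 2 - (W.length + 1) / 2)
      (tL ++ [c] ++ sL ++ cL ++ dL ++ [d])) = [] := by
    rw [List.filter_eq_nil_iff]
    intro a ha
    rw [List.eq_of_mem_replicate ha]
    simp only [hp, List.append_assoc, List.singleton_append, List.cons_append,
      List.idxOf_append_of_notMem hctL, List.idxOf_append_of_notMem hdtL,
      List.idxOf_cons_self, List.idxOf_cons_ne _ hcd, List.cons_append,
      decide_eq_true_eq]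
    omega
  -- Block D
  have hsrC : c ∉ sL.reverse := by simpa using hcsL
  have hsrD : d ∉ sL.reverse := by simpa using hdsL
  have hD : List.filter p (List.replicate ((V.length + 1) / 2)
      (tL ++ cL ++ dL ++ sL.reverse ++ [c, d])) = [] := by
    rw [List.filter_eq_nil_iff]
    intro a ha
    rw [List.eq_of_mem_replicate ha]
    simp only [hp, List.append_assoc,
      List.idxOf_append_of_notMem hctL, List.idxOf_append_of_notMem hdtL,
      List.idxOf_append_of_notMem hccL, List.idxOf_append_of_notMem hdcL,
      List.idxOf_append_of_notMem hcdL, List.idxOf_append_of_notMem hddL,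
      List.idxOf_append_of_notMem hsrC, List.idxOf_append_of_notMem hsrD,
      List.idxOf_cons_self, List.idxOf_cons_ne _ hcd, List.cons_append,
      decide_eq_true_eq]
    omega
  -- Block E: all prefer c to d
  have hE : (List.filter p (List.replicate ((W.length + 1) / 2)
      (tL ++ cL ++ dL ++ sL ++ [d, c]))).length = (W.length + 1) / 2 := by
    rw [List.filter_eq_self.mpr, List.length_replicate]
    intro a ha
    rw [List.eq_of_mem_replicate ha]
    simp only [hp, List.append_assoc,
      List.idxOf_append_of_notMem hctL, List.idxOf_append_of_notMem hdtL,
      List.idxOf_append_of_notMem hccL, List.idxOf_append_of_notMem hdcL,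
      List.idxOf_append_of_notMem hcdL, List.idxOf_append_of_notMem hddL,
      List.idxOf_append_of_notMem hcsL, List.idxOf_append_of_notMem hdsL,
      List.idxOf_cons_self, List.idxOf_cons_ne _ (Ne.symm hcd), List.cons_append,
      decide_eq_true_eq]
    omega
  refine ⟨?_, by omega, ?_⟩
  · show (List.filter p _).length = _
    simp only [MergeProfile, List.filter_append, List.length_append, hA, hB, hC, hD, hE,
      List.length_nil]
    omega
  · simp only [MergeProfile, List.length_append, List.length_map, List.length_replicate]
    omega
end

section
/- If in an election with an odd number n of voters a candidate c is, for each other candidate e, preferred by at least (n-1)/2 voters, and the sum over all other candidates e of the deficits max(0, (n+1)/2 − N(c,e)) equals s, then the Dodgson score of c is at most the total number of switches obtained by, for each deficient candidate e, moving c above e in enough voters — in particular, if every other candidate is adjacent and directly above c in some voter where c needs the vote, the Dodgson score of c is exactly s. -/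
/-!
A switch changes the pairwise count of a single ordered pair of candidates, by one, so it lowers
the total deficit `∑ₑ max(0, (n + 1) / 2 - N(c, e))` of `c` by at most one, and a Condorcet winner
has total deficit zero. Conversely, for odd `n` and `N(c, e) ≥ (n - 1) / 2` every deficit is `0`
or `1`, and a deficient `e` sitting directly above `c` in some voter is cured by switching `c` past
it there. In a voter without repetitions `c` has a single direct successor, so these voters are
distinct for distinct `e` and the switches can be made one after another.
-/

open Finset

section

variable {α : Type*} {l r : List α} {x y : α}

theorem List.Nodup.append_cons_cons (h : (l ++ x :: y :: r).Nodup) : x ∉ l ∧ y ∉ l ∧ x ≠ y := by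
  simp only [List.nodup_append, List.nodup_cons, List.mem_cons] at h
  grind

theorem List.Nodup.append_swap (h : (l ++ x :: y :: r).Nodup) : (l ++ y :: x :: r).Nodup :=
  (List.Perm.append_left l (List.Perm.swap y x r)).nodup_iff.1 h

theorem SwitchProfile.length_eq {V W : List (List α)} (h : SwitchProfile V W) :
    W.length = V.length := by
  obtain ⟨P, Q, v, w, rfl, rfl, -⟩ := h
  simp

theorem SwitchProfile.nodup {V W : List (List α)} (h : SwitchProfile V W)
    (hV : ∀ v ∈ V, v.Nodup) : ∀ w ∈ W, w.Nodup := by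
  obtain ⟨P, Q, v, w, rfl, rfl, l, r, x, y, rfl, rfl⟩ := h
  intro u hu
  simp only [List.mem_append, List.mem_cons] at hu
  rcases hu with hu | rfl | hu
  · exact hV u (by simp [hu])
  · exact (hV _ (by simp)).append_swap
  · exact hV u (by simp [hu])

theorem Reach.switchProfile_length_eq :
    ∀ {k : ℕ} {V W : List (List α)}, Reach SwitchProfile k V W → W.length = V.length
  | 0, _, _, rfl => rfl
  | _ + 1, _, _, ⟨_, hVM, hMW⟩ => (Reach.switchProfile_length_eq hMW).trans hVM.length_eq

variable [DecidableEq α]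

instance (v : List α) (x y : α) : Decidable (prefers v x y) :=
  inferInstanceAs (Decidable (_ < _))

theorem numPrefer_append_cons (P Q : List (List α)) (v : List α) (a b : α) :
    numPrefer (P ++ v :: Q) a b = numPrefer (P ++ Q) a b + if prefers v a b then 1 else 0 := by
  simp only [numPrefer, ← List.countP_eq_length_filter, List.countP_append, List.countP_cons,
    decide_eq_true_eq, ← Nat.add_assoc]
  rfl

theorem idxOf_append_swap (h : (l ++ x :: y :: r).Nodup) (z : α) :
    (z = x ∧ (l ++ x :: y :: r).idxOf z = l.length ∧ (l ++ y :: x :: r).idxOf z = l.length + 1) ∨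
    (z = y ∧ (l ++ x :: y :: r).idxOf z = l.length + 1 ∧ (l ++ y :: x :: r).idxOf z = l.length) ∨
    ((l ++ y :: x :: r).idxOf z = (l ++ x :: y :: r).idxOf z ∧
      ((l ++ x :: y :: r).idxOf z < l.length ∨ l.length + 2 ≤ (l ++ x :: y :: r).idxOf z)) := by
  obtain ⟨hx, hy, hxy⟩ := h.append_cons_cons
  by_cases hzl : z ∈ l
  · simp [List.idxOf_append_of_mem hzl, List.idxOf_lt_length_iff.2 hzl]
  · simp only [List.idxOf_append_of_notMem hzl, List.idxOf_cons]
    grind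

theorem prefers_append_swap_iff (h : (l ++ x :: y :: r).Nodup) {a b : α}
    (hxy : ¬(a = x ∧ b = y)) (hyx : ¬(a = y ∧ b = x)) :
    prefers (l ++ y :: x :: r) a b ↔ prefers (l ++ x :: y :: r) a b := by
  unfold prefers
  rcases idxOf_append_swap h a with ⟨ha, ha₁, ha₂⟩ | ⟨ha, ha₁, ha₂⟩ | ⟨ha₁, ha₂⟩ <;>
  rcases idxOf_append_swap h b with ⟨hb, hb₁, hb₂⟩ | ⟨hb, hb₁, hb₂⟩ | ⟨hb₁, hb₂⟩ <;>
  first | omega | exact absurd (And.intro ha hb) hxy | exact absurd (And.intro ha hb) hyx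

theorem prefers_append_cons_cons (h : (l ++ x :: y :: r).Nodup) :
    prefers (l ++ x :: y :: r) y x := by
  obtain ⟨hx, hy, hxy⟩ := h.append_cons_cons
  simp [prefers, List.idxOf_append_of_notMem, hx, hy, hxy]

namespace SwitchProfile

variable {V W : List (List α)}

theorem numPrefer_le (h : SwitchProfile V W) (a b : α) :
    numPrefer W a b ≤ numPrefer V a b + 1 := by
  obtain ⟨P, Q, v, w, rfl, rfl, -⟩ := h
  rw [numPrefer_append_cons, numPrefer_append_cons]
  split_ifs <;> omega

/-- `e₀` is the candidate switched with `c`, if any. -/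
theorem exists_numPrefer_eq (h : SwitchProfile V W) (hV : ∀ v ∈ V, v.Nodup) (c : α) :
    ∃ e₀, ∀ e ≠ e₀, numPrefer W c e = numPrefer V c e := by
  obtain ⟨P, Q, v, w, rfl, rfl, l, r, x, y, rfl, rfl⟩ := h
  have hv : (l ++ x :: y :: r).Nodup := hV _ (by simp)
  refine ⟨if c = x then y else x, fun e he => ?_⟩
  rw [numPrefer_append_cons, numPrefer_append_cons,
    if_congr (prefers_append_swap_iff hv ?_ ?_) rfl rfl]
  · rintro ⟨rfl, rfl⟩; simp at he
  · rintro ⟨rfl, rfl⟩; split_ifs at he with hyx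
    · exact hv.append_cons_cons.2.2 hyx.symm
    · exact he rfl

end SwitchProfile

theorem Finset.sum_tsub_le_sum_tsub_add_one (S : Finset α) (t : ℕ) {f g : α → ℕ} (e₀ : α)
    (hfg : ∀ e ≠ e₀, g e = f e) (he₀ : g e₀ ≤ f e₀ + 1) :
    ∑ e ∈ S, (t - f e) ≤ ∑ e ∈ S, (t - g e) + 1 :=
  calc ∑ e ∈ S, (t - f e)
      ≤ ∑ e ∈ S, ((t - g e) + if e₀ = e then 1 else 0) := by
        refine sum_le_sum fun e _ => ?_
        split_ifs with h
        · subst h; omega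
        · rw [hfg e (Ne.symm h)]; omega
    _ = ∑ e ∈ S, (t - g e) + if e₀ ∈ S then 1 else 0 := by rw [sum_add_distrib, sum_ite_eq]
    _ ≤ ∑ e ∈ S, (t - g e) + 1 := by split_ifs <;> omega

/-- `∑_{e ≠ c} max(0, (n + 1) / 2 - N(c, e))`, the maximum being the truncated subtraction. -/
def deficitSum (C : Finset α) (V : List (List α)) (c : α) : ℕ :=
  ∑ e ∈ C.erase c, ((V.length + 1) / 2 - numPrefer V c e)

theorem deficitSum_eq_zero {C : Finset α} {V : List (List α)} {c : α}
    (h : CondorcetWinner C V c) : deficitSum C V c = 0 :=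
  sum_eq_zero fun e he => by
    have := h.2 e (mem_of_mem_erase he) (ne_of_mem_erase he)
    omega

theorem SwitchProfile.deficitSum_le {V W : List (List α)} (h : SwitchProfile V W)
    (hV : ∀ v ∈ V, v.Nodup) (C : Finset α) (c : α) :
    deficitSum C V c ≤ deficitSum C W c + 1 := by
  obtain ⟨e₀, he₀⟩ := h.exists_numPrefer_eq hV c
  unfold deficitSum
  rw [h.length_eq]
  exact sum_tsub_le_sum_tsub_add_one _ _ e₀ he₀ (h.numPrefer_le c e₀)

theorem Reach.deficitSum_le (C : Finset α) (c : α) :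
    ∀ {k : ℕ} {V W : List (List α)}, Reach SwitchProfile k V W → (∀ v ∈ V, v.Nodup) →
      deficitSum C V c ≤ deficitSum C W c + k
  | 0, _, _, rfl, _ => le_rfl
  | _ + 1, _, _, ⟨_, hVM, hMW⟩, hV => by
    have := Reach.deficitSum_le C c hMW (hVM.nodup hV)
    have := hVM.deficitSum_le hV C c
    omega

theorem deficitSum_le_of_reach {C : Finset α} {V W : List (List α)} {c : α} {k : ℕ}
    (hVW : Reach SwitchProfile k V W) (hW : CondorcetWinner C W c) (hV : ∀ v ∈ V, v.Nodup) :
    deficitSum C V c ≤ k := by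
  simpa [deficitSum_eq_zero hW] using hVW.deficitSum_le C c hV

theorem dodgsonScore_eq_deficitSum {C : Finset α} {V W : List (List α)} {c : α}
    (hV : ∀ v ∈ V, v.Nodup) (hVW : Reach SwitchProfile (deficitSum C V c) V W)
    (hW : CondorcetWinner C W c) : DodgsonScore C V c = deficitSum C V c :=
  IsLeast.csInf_eq ⟨⟨W, hVW, hW⟩, fun _ ⟨_, hr, hw⟩ => deficitSum_le_of_reach hr hw hV⟩

theorem List.Nodup.eq_of_append_cons_cons {l r l' r' : List α} {c e e' : α}
    (h : (l ++ c :: e :: r).Nodup) (h' : l' ++ c :: e' :: r' = l ++ c :: e :: r) : e' = e := by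
  have hl : l'.length = l.length := by
    have hc : c ∉ l := h.append_cons_cons.1
    have hc' : c ∉ l' := (h' ▸ h).append_cons_cons.1
    have := congrArg (List.idxOf c) h'
    simpa [List.idxOf_append_of_notMem, hc, hc'] using this
  obtain ⟨-, h'⟩ := List.cons.inj (List.append_inj h' hl).2
  exact (List.cons.inj h').1

theorem numPrefer_switch_past {P Q : List (List α)} {c e : α}
    (hv : (l ++ c :: e :: r).Nodup) (e' : α) :
    numPrefer (P ++ (l ++ e :: c :: r) :: Q) c e' =
      numPrefer (P ++ (l ++ c :: e :: r) :: Q) c e' + if e' = e then 1 else 0 := by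
  obtain ⟨-, -, hce⟩ := hv.append_cons_cons
  rw [numPrefer_append_cons, numPrefer_append_cons]
  by_cases he : e' = e
  · subst he
    have hw : prefers (l ++ e' :: c :: r) c e' := prefers_append_cons_cons hv.append_swap
    have hv' : ¬prefers (l ++ c :: e' :: r) c e' := lt_asymm (prefers_append_cons_cons hv)
    simp [hw, hv']
  · rw [if_neg he, add_zero,
      if_congr (prefers_append_swap_iff hv (fun h => he h.2) (fun h => hce h.1)) rfl rfl]

theorem exists_reach_switch_past (c : α) (D : Finset α) :
    ∀ V : List (List α), (∀ v ∈ V, v.Nodup) →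
      (∀ e ∈ D, ∃ l r : List α, l ++ c :: e :: r ∈ V) →
      ∃ W, Reach SwitchProfile #D V W ∧
        ∀ e, numPrefer W c e = numPrefer V c e + if e ∈ D then 1 else 0 := by
  induction D using Finset.induction_on with
  | empty => exact fun V _ _ => ⟨V, rfl, by simp⟩
  | insert e₀ D he₀ ih =>
    intro V hV hD
    obtain ⟨l, r, hv⟩ := hD e₀ (mem_insert_self _ _)
    obtain ⟨P, Q, rfl⟩ := List.append_of_mem hv
    have hvnd := hV _ hv
    have hstep : SwitchProfile (P ++ (l ++ c :: e₀ :: r) :: Q) (P ++ (l ++ e₀ :: c :: r) :: Q) :=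
      ⟨P, Q, _, _, rfl, rfl, l, r, c, e₀, rfl, rfl⟩
    -- the voter just switched was the only one with `e₀` directly above `c`
    have hD' : ∀ e ∈ D, ∃ l' r' : List α, l' ++ c :: e :: r' ∈ P ++ (l ++ e₀ :: c :: r) :: Q := by
      intro e he
      obtain ⟨l', r', hmem⟩ := hD e (mem_insert_of_mem he)
      have hne : l' ++ c :: e :: r' ≠ l ++ c :: e₀ :: r := fun h =>
        he₀ (hvnd.eq_of_append_cons_cons h ▸ he)
      refine ⟨l', r', ?_⟩
      simp only [List.mem_append, List.mem_cons] at hmem ⊢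
      tauto
    obtain ⟨W, hreach, hW⟩ := ih _ (hstep.nodup hV) hD'
    refine ⟨W, by rw [card_insert_of_notMem he₀]; exact ⟨_, hstep, hreach⟩, fun e => ?_⟩
    rw [hW, numPrefer_switch_past hvnd]
    by_cases h : e = e₀
    · subst h; simp [he₀]
    · simp [h]

theorem Nat.add_one_div_two_tsub_eq_ite {n N : ℕ} (hn : Odd n) (hN : n ≤ 2 * N + 1) :
    (n + 1) / 2 - N = if 2 * N ≤ n then 1 else 0 := by
  obtain ⟨m, rfl⟩ := hn
  split_ifs <;> omega

end

/-- Suppose the number `n` of voters is odd, each other candidate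
`e` is preferred to `c` by at least `(n-1)/2` voters (i.e. `n ≤ 2·N(c,e) + 1`),
and every candidate against whom `c` still needs a vote (`2·N(c,e) ≤ n`) sits
directly above `c` in some voter's order. Then the Dodgson score of `c` equals
the sum of the deficits `s = ∑_{e ≠ c} max(0, (n+1)/2 − N(c,e))` (truncated
subtraction). -/
theorem dodgson_score_eq_deficit_sum {α : Type*} [DecidableEq α]
    (C : Finset α) (V : List (List α)) (c : α)
    (hV : ∀ v ∈ V, IsVoter C v) (hc : c ∈ C) (hodd : Odd V.length)
    (hge : ∀ e ∈ C, e ≠ c → V.length ≤ 2 * numPrefer V c e + 1)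
    (hadj : ∀ e ∈ C, e ≠ c → 2 * numPrefer V c e ≤ V.length →
      ∃ l r : List α, l ++ c :: e :: r ∈ V) :
    DodgsonScore C V c =
      ∑ e ∈ C.erase c, ((V.length + 1) / 2 - numPrefer V c e) := by
  have hnd : ∀ v ∈ V, v.Nodup := fun v hv => (hV v hv).1
  set D := {e ∈ C.erase c | 2 * numPrefer V c e ≤ V.length}
  have hD : deficitSum C V c = #D := by
    rw [card_filter]
    exact sum_congr rfl fun e he =>
      Nat.add_one_div_two_tsub_eq_ite hodd (hge e (mem_of_mem_erase he) (ne_of_mem_erase he))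
  obtain ⟨W, hreach, hW⟩ := exists_reach_switch_past c D V hnd fun e he => by
    obtain ⟨he, hdef⟩ := mem_filter.1 he
    exact hadj e (mem_of_mem_erase he) (ne_of_mem_erase he) hdef
  have hwin : CondorcetWinner C W c := by
    refine ⟨hc, fun e he hec => ?_⟩
    have := hge e he hec
    rw [hreach.switchProfile_length_eq, hW e]
    split_ifs with hmem
    · omega
    · have : ¬2 * numPrefer V c e ≤ V.length := fun h =>
        hmem (mem_filter.2 ⟨mem_erase.2 ⟨hec, he⟩, h⟩)
      omega
  exact dodgsonScore_eq_deficitSum hnd (hD ▸ hreach) hwin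
end
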